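/- arXiv:math-ph/0610059 — 2 statements merged into one kernel-verified Lean document; each statement's English description precedes it below -/
import Mathlib

section
/- Let ⟨φ,ψ⟩ = ∫_{S¹} (fg)₁ dx be the Berezin pairing of a λ-density φ = f α^λ and a μ-density ψ = g α^μ with λ+μ = 1/2, where (fg)₁ denotes the coefficient of ξ in the product fg. Then the pairing is K(1)-invariant: for every homogeneous superfunction h with periodic coefficients, ⟨L^λ_{X_h} f, g⟩ + (−1)^{p(h)p(f)} ⟨f, L^μ_{X_h} g⟩ = 0. -/
/-- A superfunction `f(x,ξ) = f₀(x) + ξ f₁(x)` on `S^{1|1}`, encoded as the pair `(f₀, f₁)`. -/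
abbrev SF : Type := (ℝ → ℂ) × (ℝ → ℂ)

namespace SF

/-- The odd derivation `D̄ = ∂/∂ξ - ξ ∂/∂x`. -/
noncomputable def Dbar (f : SF) : SF := (f.2, fun x => -deriv f.1 x)

/-- The odd derivation `D = ∂/∂ξ + ξ ∂/∂x`. -/
noncomputable def Dop (f : SF) : SF := (f.2, fun x => deriv f.1 x)

/-- The even derivation `∂/∂x`, i.e. `f ↦ f′`. -/
noncomputable def dx (f : SF) : SF := (fun x => deriv f.1 x, fun x => deriv f.2 x)

/-- The odd derivation `∂/∂ξ`. -/
def dxi (f : SF) : SF := (f.2, 0)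

/-- Product of superfunctions: `(f₀ + ξf₁)(g₀ + ξg₁) = f₀g₀ + ξ(f₀g₁ + f₁g₀)`. -/
def mul (f g : SF) : SF := (f.1 * g.1, f.1 * g.2 + f.2 * g.1)

/-- The odd coordinate `ξ` as a superfunction. -/
def xi : SF := (0, fun _ => 1)

/-- The even coordinate `x` as a superfunction. -/
def xc : SF := (fun x => (x : ℂ), 0)

/-- `x²` as a superfunction. -/
def xc2 : SF := (fun x => (x : ℂ)^2, 0)

/-- `xξ` as a superfunction. -/
def xxi : SF := (0, fun x => (x : ℂ))

/-- The constant superfunction `1`. -/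
def one : SF := (fun _ => 1, 0)

/-- `f` is even: `f = f₀(x)`. -/
def IsEven (f : SF) : Prop := f.2 = 0

/-- `f` is odd: `f = ξ f₁(x)`. -/
def IsOdd (f : SF) : Prop := f.1 = 0

/-- `f` is homogeneous of parity `p` (`p = 0` even, `p = 1` odd). -/
def Homog (f : SF) (p : ℕ) : Prop := (p = 0 ∧ IsEven f) ∨ (p = 1 ∧ IsOdd f)

/-- `f` has smooth coefficients. -/
def Smooth (f : SF) : Prop := ContDiff ℝ (⊤ : ℕ∞) f.1 ∧ ContDiff ℝ (⊤ : ℕ∞) f.2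

/-- The contact vector field `X_f = -f D̄² + (1/2) D(f) D̄` with contact Hamiltonian `f`. -/
noncomputable def Xop (f : SF) (g : SF) : SF :=
  mul (-f) (Dbar (Dbar g)) + ((1:ℂ)/2) • mul (Dop f) (Dbar g)

/-- The action `L^λ_{X_f} = X_f + λ f′` on `λ`-densities. -/
noncomputable def Lden (lam : ℂ) (f : SF) (g : SF) : SF :=
  Xop f g + lam • mul (dx f) g

/-- The contact bracket `{f,g} = fg′ - f′g + (-1)^{p(f)(p(g)+1)} (1/2) D(f)D(g)`
for `f` of parity `pf` and `g` of parity `pg`. -/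
noncomputable def cbr (pf pg : ℕ) (f g : SF) : SF :=
  mul f (dx g) - mul (dx f) g + ((-1:ℂ)^(pf*(pg+1)) * ((1:ℂ)/2)) • mul (Dop f) (Dop g)

end SF

open SF

lemma Lden_fst (ν : ℂ) (h f : SF) (x : ℝ) :
    (Lden ν h f).1 x = h.1 x * deriv f.1 x + (1/2) * h.2 x * f.2 x + ν * (deriv h.1 x * f.1 x) := by
  simp [Lden, Xop, Dbar, Dop, dx, mul, Prod.fst_add, Prod.smul_fst]; ring

lemma Lden_snd (ν : ℂ) (h f : SF) (x : ℝ) :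
    (Lden ν h f).2 x = h.1 x * deriv f.2 x + (1/2) * h.2 x * deriv f.1 x + (1/2) * deriv h.1 x * f.2 x
      + ν * (deriv h.1 x * f.2 x + deriv h.2 x * f.1 x) := by
  simp [Lden, Xop, Dbar, Dop, dx, mul, Prod.snd_add, Prod.smul_snd]; ring

lemma mul_snd' (a b : SF) (x : ℝ) : (mul a b).2 x = a.1 x * b.2 x + a.2 x * b.1 x := rfl

lemma hD {F : ℝ → ℂ} (hF : ContDiff ℝ (⊤ : ℕ∞) F) (x : ℝ) : HasDerivAt F (deriv F x) x :=
  (hF.differentiable (by simp) x).hasDerivAt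

lemma deriv_zero_fun : deriv (0 : ℝ → ℂ) = 0 := by
  funext x; exact deriv_const x 0

lemma int_deriv_zero (F I : ℝ → ℂ) (hd : ∀ x, HasDerivAt F (I x) x)
    (hI : IntervalIntegrable I MeasureTheory.volume 0 (2*Real.pi))
    (hp : F (2*Real.pi) = F 0) : ∫ x in (0:ℝ)..(2*Real.pi), I x = 0 := by
  rw [intervalIntegral.integral_eq_sub_of_hasDerivAt (fun x _ => hd x) hI, hp, sub_self]


/-- the Berezin pairing `⟨fα^λ, gα^μ⟩ = ∫ (fg)₁ dx`, `λ + μ = 1/2`,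
is K(1)-invariant. -/
theorem berezin_pairing_invariant (lam mu : ℂ) (hlm : lam + mu = 1/2)
    (h f g : SF) (ph pf pg : ℕ)
    (hh : Homog h ph) (hf : Homog f pf) (hg : Homog g pg)
    (hhs : Smooth h) (hfs : Smooth f) (hgs : Smooth g)
    (hhp : Function.Periodic h.1 (2*Real.pi) ∧ Function.Periodic h.2 (2*Real.pi))
    (hfp : Function.Periodic f.1 (2*Real.pi) ∧ Function.Periodic f.2 (2*Real.pi))
    (hgp : Function.Periodic g.1 (2*Real.pi) ∧ Function.Periodic g.2 (2*Real.pi)) :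
    (∫ x in (0:ℝ)..(2*Real.pi), (mul (Lden lam h f) g).2 x)
      + (-1:ℂ)^(ph*pf) * ∫ x in (0:ℝ)..(2*Real.pi), (mul f (Lden mu h g)).2 x = 0 := by
  have ch1 : Continuous h.1 := hhs.1.continuous
  have ch2 : Continuous h.2 := hhs.2.continuous
  have cf1 : Continuous f.1 := hfs.1.continuous
  have cf2 : Continuous f.2 := hfs.2.continuous
  have cg1 : Continuous g.1 := hgs.1.continuous
  have cg2 : Continuous g.2 := hgs.2.continuous
  have ch1' : Continuous (deriv h.1) := hhs.1.continuous_deriv (by simp)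
  have ch2' : Continuous (deriv h.2) := hhs.2.continuous_deriv (by simp)
  have cf1' : Continuous (deriv f.1) := hfs.1.continuous_deriv (by simp)
  have cf2' : Continuous (deriv f.2) := hfs.2.continuous_deriv (by simp)
  have cg1' : Continuous (deriv g.1) := hgs.1.continuous_deriv (by simp)
  have cg2' : Continuous (deriv g.2) := hgs.2.continuous_deriv (by simp)
  have cI1 : Continuous (fun x => (mul (Lden lam h f) g).2 x) := by
    simp only [mul_snd', Lden_fst, Lden_snd]; fun_prop
  have cI2 : Continuous (fun x => (mul f (Lden mu h g)).2 x) := by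
    simp only [mul_snd', Lden_fst, Lden_snd]; fun_prop
  have int1 : IntervalIntegrable _ MeasureTheory.volume (0:ℝ) (2*Real.pi) := cI1.intervalIntegrable _ _
  have int2 : IntervalIntegrable _ MeasureTheory.volume (0:ℝ) (2*Real.pi) := cI2.intervalIntegrable _ _
  obtain ⟨rfl, hhe⟩ | ⟨rfl, hho⟩ := hh
  · -- h even
    have hhe' : h.2 = 0 := hhe
    rw [Nat.zero_mul, pow_zero, one_mul, ← intervalIntegral.integral_add int1 int2]
    apply int_deriv_zero (fun x => h.1 x * (f.1 x * g.2 x + f.2 x * g.1 x))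
    · intro x
      have H := (hD hhs.1 x).mul
        (((hD hfs.1 x).mul (hD hgs.2 x)).add ((hD hfs.2 x).mul (hD hgs.1 x)))
      refine H.congr_deriv (Eq.symm ?_)
      simp only [mul_snd', Lden_fst, Lden_snd, hhe', Pi.zero_apply, deriv_zero_fun, Pi.add_apply, Pi.mul_apply]
      linear_combination (deriv h.1 x * f.1 x * g.2 x + deriv h.1 x * f.2 x * g.1 x) * hlm
    · exact int1.add int2
    · have := hhp.1 0; have := hfp.1 0; have := hfp.2 0; have := hgp.1 0; have := hgp.2 0
      simp_all
  · -- h odd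
    have hho' : h.1 = 0 := hho
    obtain ⟨rfl, hfe⟩ | ⟨rfl, hfo⟩ := hf
    · -- f even
      have hfe' : f.2 = 0 := hfe
      rw [Nat.mul_zero, pow_zero, one_mul, ← intervalIntegral.integral_add int1 int2]
      apply int_deriv_zero (fun x => (1/2 : ℂ) * (h.2 x * (f.1 x * g.1 x)))
      · intro x
        have H := (((hD hhs.2 x).mul ((hD hfs.1 x).mul (hD hgs.1 x)))).const_mul ((1:ℂ)/2)
        refine H.congr_deriv (Eq.symm ?_)
        simp only [mul_snd', Lden_fst, Lden_snd, hho', hfe', Pi.zero_apply, deriv_zero_fun, Pi.add_apply, Pi.mul_apply]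
        linear_combination (deriv h.2 x * f.1 x * g.1 x) * hlm
      · exact int1.add int2
      · have := hhp.2 0; have := hfp.1 0; have := hgp.1 0
        simp_all
    · -- f odd
      have hfo' : f.1 = 0 := hfo
      rw [Nat.mul_one, pow_one, neg_one_mul, add_neg_eq_zero]
      congr 1
      funext x
      simp only [mul_snd', Lden_fst, Lden_snd, hho', hfo', Pi.zero_apply, deriv_zero_fun]
      ring
end

section
/- For every odd positive integer k, the operator D̄^k : F_{(1−k)/4} → F_{(1+k)/4} is osp(1|2)-invariant: for each of the five superfunctions f ∈ {1, x, x², ξ, xξ}, one has L^{(1+k)/4}_{X_f} ∘ D̄^k = (−1)^{p(f)} D̄^k ∘ L^{(1−k)/4}_{X_f}. -/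
open SF


section Aux

/-- Abbreviation for infinitely differentiable. -/
def Sm (u : ℝ → ℂ) : Prop := ContDiff ℝ (⊤:ℕ∞) u

lemma Sm.diffAt {u : ℝ → ℂ} (hu : Sm u) (x : ℝ) : DifferentiableAt ℝ u x :=
  (hu.differentiable (by simp)).differentiableAt

lemma Sm.deriv {u : ℝ → ℂ} (hu : Sm u) : Sm (_root_.deriv u) :=
  ContDiff.iterate_deriv 1 hu

lemma Sm.iter {u : ℝ → ℂ} (hu : Sm u) (n : ℕ) : Sm (_root_.deriv^[n] u) :=
  ContDiff.iterate_deriv n hu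

lemma sm_x : Sm (fun x : ℝ => (x:ℂ)) := Complex.ofRealCLM.contDiff.of_le le_top

lemma Sm.xmul {u : ℝ → ℂ} (hu : Sm u) : Sm (fun x : ℝ => (x:ℂ) * u x) := sm_x.mul hu

lemma Sm.cmul {u : ℝ → ℂ} (hu : Sm u) (c : ℂ) : Sm (fun x => c * u x) := contDiff_const.mul hu

lemma Sm.add {u v : ℝ → ℂ} (hu : Sm u) (hv : Sm v) : Sm (fun x => u x + v x) :=
  ContDiff.add hu hv

lemma deriv_x (x : ℝ) : deriv (fun x : ℝ => (x:ℂ)) x = 1 :=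
  Complex.ofRealCLM.hasDerivAt.deriv

lemma iter_succ' (u : ℝ → ℂ) (n : ℕ) :
    deriv^[n+1] u = deriv (deriv^[n] u) := Function.iterate_succ_apply' deriv n u

lemma iter_cmul (u : ℝ → ℂ) (c : ℂ) (n : ℕ) :
    deriv^[n] (fun x => c * u x) = fun x => c * deriv^[n] u x := by
  induction n with
  | zero => rfl
  | succ n ih =>
      rw [iter_succ', ih, iter_succ']
      funext x
      exact deriv_const_mul_field c

lemma iter_add {u v : ℝ → ℂ} (hu : Sm u) (hv : Sm v) (n : ℕ) :
    deriv^[n] (fun x => u x + v x) = fun x => deriv^[n] u x + deriv^[n] v x := by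
  induction n with
  | zero => rfl
  | succ n ih =>
      rw [iter_succ', ih, iter_succ', iter_succ']
      funext x
      exact deriv_add ((hu.iter n).diffAt x) ((hv.iter n).diffAt x)

lemma iter_deriv_comm (u : ℝ → ℂ) (n : ℕ) :
    deriv^[n] (deriv u) = deriv^[n+1] u :=
  (Function.iterate_succ_apply deriv n u).symm

lemma iter_xmul {u : ℝ → ℂ} (hu : Sm u) (n : ℕ) :
    deriv^[n] (fun x : ℝ => (x:ℂ) * u x)
      = fun x : ℝ => (x:ℂ) * deriv^[n] u x + (n:ℂ) * deriv^[n-1] u x := by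
  induction n with
  | zero => simp
  | succ n ih =>
      rw [iter_succ', ih]
      funext x
      have hx : DifferentiableAt ℝ (fun x : ℝ => (x:ℂ)) x := sm_x.diffAt x
      have h1 : DifferentiableAt ℝ (deriv^[n] u) x := (hu.iter n).diffAt x
      have h2 : DifferentiableAt ℝ (fun x : ℝ => (x:ℂ) * deriv^[n] u x) x := (hx.mul h1)
      have h3 : DifferentiableAt ℝ (fun x : ℝ => (n:ℂ) * deriv^[n-1] u x) x :=
        ((hu.iter (n-1)).cmul (n:ℂ)).diffAt x
      rw [deriv_fun_add h2 h3, deriv_fun_mul hx h1, deriv_x, deriv_const_mul_field (n:ℂ)]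
      rw [← Function.iterate_succ_apply' deriv n u]
      cases n with
      | zero => push_cast; ring
      | succ m =>
          have : deriv (deriv^[m+1-1] u) = deriv^[m+1] u := by
            simp only [Nat.add_sub_cancel, ← Function.iterate_succ_apply' deriv m u]
          rw [this]
          push_cast
          ring

end Aux

section SFLemmas

lemma deriv_zfun (x : ℝ) : deriv (0 : ℝ → ℂ) x = 0 := by
  change deriv (fun _ : ℝ => (0:ℂ)) x = 0; simp

lemma deriv_x2 (x : ℝ) : deriv (fun x : ℝ => (x:ℂ)^2) x = 2*(x:ℂ) := by
  have h1 : HasDerivAt (fun x : ℝ => (x:ℂ)) 1 x := Complex.ofRealCLM.hasDerivAt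
  have h2 : HasDerivAt (fun x : ℝ => (x:ℂ)^2) (2*(x:ℂ)) x := by
    have h := h1.mul h1
    simp only [one_mul, mul_one] at h
    have e : (fun x : ℝ => (x:ℂ)^2) = fun x : ℝ => (x:ℂ) * (x:ℂ) := by
      funext y; ring
    rw [e]
    exact h.congr_deriv (by ring)
  exact h2.deriv

lemma Dbar_odd (m : ℕ) (g : SF) :
    Dbar^[2*m+1] g = (fun x : ℝ => (-1:ℂ)^m * deriv^[m] g.2 x,
                      fun x : ℝ => (-1:ℂ)^(m+1) * deriv^[m+1] g.1 x) := by
  induction m generalizing g with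
  | zero => simp [Dbar]
  | succ m ih =>
      have h2 : (2*(m+1)+1) = (2*m+1) + 2 := by ring
      rw [h2, Function.iterate_add_apply]
      have hDD : Dbar^[2] g = (fun x : ℝ => -deriv g.1 x, fun x : ℝ => -deriv g.2 x) := by
        simp [Dbar]
      rw [hDD, ih]
      refine Prod.ext ?_ ?_ <;> funext x
      · show (-1:ℂ)^m * deriv^[m] (fun x : ℝ => -deriv g.2 x) x = (-1:ℂ)^(m+1) * deriv^[m+1] g.2 x
        have : (fun x : ℝ => -deriv g.2 x) = fun x : ℝ => (-1:ℂ) * deriv g.2 x := by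
          funext x; ring
        rw [this, iter_cmul, iter_deriv_comm]; ring
      · show (-1:ℂ)^(m+1) * deriv^[m+1] (fun x : ℝ => -deriv g.1 x) x
            = (-1:ℂ)^(m+1+1) * deriv^[m+1+1] g.1 x
        have : (fun x : ℝ => -deriv g.1 x) = fun x : ℝ => (-1:ℂ) * deriv g.1 x := by
          funext x; ring
        rw [this, iter_cmul, iter_deriv_comm]; ring

lemma Lden_one (lam : ℂ) (g : SF) :
    Lden lam one g = (fun x : ℝ => deriv g.1 x, fun x : ℝ => deriv g.2 x) := by
  refine Prod.ext ?_ ?_ <;> funext x <;>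
    simp [Lden, Xop, mul, Dbar, Dop, dx, one, Prod.fst_add, Prod.snd_add,
      Pi.add_apply, Pi.mul_apply, Pi.neg_apply, smul_eq_mul, deriv_zfun] <;> try ring

lemma Lden_xc (lam : ℂ) (g : SF) :
    Lden lam xc g = (fun x : ℝ => (x:ℂ) * deriv g.1 x + lam * g.1 x,
                     fun x : ℝ => (x:ℂ) * deriv g.2 x + (lam + 1/2) * g.2 x) := by
  refine Prod.ext ?_ ?_ <;> funext x <;>
    simp [Lden, Xop, mul, Dbar, Dop, dx, xc, Prod.fst_add, Prod.snd_add,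
      Pi.add_apply, Pi.mul_apply, Pi.neg_apply, smul_eq_mul, deriv_zfun, deriv_x] <;> try ring

lemma Lden_xc2 (lam : ℂ) (g : SF) :
    Lden lam xc2 g = (fun x : ℝ => (x:ℂ)^2 * deriv g.1 x + 2*lam*((x:ℂ) * g.1 x),
                      fun x : ℝ => (x:ℂ)^2 * deriv g.2 x + (2*lam+1)*((x:ℂ) * g.2 x)) := by
  refine Prod.ext ?_ ?_ <;> funext x <;>
    simp [Lden, Xop, mul, Dbar, Dop, dx, xc2, Prod.fst_add, Prod.snd_add,
      Pi.add_apply, Pi.mul_apply, Pi.neg_apply, smul_eq_mul, deriv_zfun, deriv_x2] <;> try ring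

lemma Lden_xi (lam : ℂ) (g : SF) :
    Lden lam xi g = (fun x : ℝ => (1/2:ℂ) * g.2 x, fun x : ℝ => (1/2:ℂ) * deriv g.1 x) := by
  refine Prod.ext ?_ ?_ <;> funext x <;>
    simp [Lden, Xop, mul, Dbar, Dop, dx, xi, Prod.fst_add, Prod.snd_add,
      Pi.add_apply, Pi.mul_apply, Pi.neg_apply, smul_eq_mul, deriv_zfun] <;> try ring

lemma Lden_xxi (lam : ℂ) (g : SF) :
    Lden lam xxi g = (fun x : ℝ => (1/2:ℂ) * ((x:ℂ) * g.2 x),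
                      fun x : ℝ => (1/2:ℂ) * ((x:ℂ) * deriv g.1 x) + lam * g.1 x) := by
  refine Prod.ext ?_ ?_ <;> funext x <;>
    simp [Lden, Xop, mul, Dbar, Dop, dx, xxi, Prod.fst_add, Prod.snd_add,
      Pi.add_apply, Pi.mul_apply, Pi.neg_apply, smul_eq_mul, deriv_zfun, deriv_x] <;> try ring

end SFLemmas

section Leib

lemma Sm.x2mul' {u : ℝ → ℂ} (hu : Sm u) : Sm (fun x : ℝ => (x:ℂ)^2 * u x) :=
by
  have e : (fun x : ℝ => (x:ℂ)^2 * u x) = fun x : ℝ => (x:ℂ) * ((x:ℂ) * u x) := by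
    funext x; ring
  rw [e]; exact hu.xmul.xmul

lemma iter_xmul_deriv {u : ℝ → ℂ} (hu : Sm u) (n : ℕ) :
    deriv^[n] (fun x : ℝ => (x:ℂ) * deriv u x)
      = fun x : ℝ => (x:ℂ) * deriv^[n+1] u x + (n:ℂ) * deriv^[n] u x := by
  rw [iter_xmul hu.deriv n]
  funext x
  rw [iter_deriv_comm]
  cases n with
  | zero => simp
  | succ p =>
      rw [show p + 1 - 1 = p from rfl, iter_deriv_comm]

lemma iter_x2_deriv {u : ℝ → ℂ} (hu : Sm u) (n : ℕ) :
    deriv^[n] (fun x : ℝ => (x:ℂ)^2 * deriv u x)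
      = fun x : ℝ => (x:ℂ)^2 * deriv^[n+1] u x + 2*(n:ℂ)*(x:ℂ) * deriv^[n] u x
          + (n:ℂ)*((n:ℂ)-1) * deriv^[n-1] u x := by
  have e : (fun x : ℝ => (x:ℂ)^2 * deriv u x)
      = fun x : ℝ => (x:ℂ) * ((x:ℂ) * deriv u x) := by funext x; ring
  rw [e]
  cases n with
  | zero => funext x; simp; ring
  | succ p =>
      rw [iter_xmul (hu.deriv.xmul) (p+1), show p + 1 - 1 = p from rfl,
        iter_xmul_deriv hu (p+1), iter_xmul_deriv hu p]
      funext x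
      push_cast
      ring

end Leib

lemma deriv_iter_apply (u : ℝ → ℂ) (n : ℕ) (x : ℝ) :
    deriv (deriv^[n] u) x = deriv^[n+1] u x := congrFun (iter_succ' u n).symm x

/-- for odd `k`, the operator `D̄^k : F_{(1-k)/4} → F_{(1+k)/4}`
is osp(1|2)-invariant. -/
theorem bol_operator_invariant (k : ℕ) (hk : Odd k) (f : SF) (pf : ℕ)
    (hf : (f, pf) ∈ [(one, 0), (xc, 0), (xc2, 0), (xi, 1), (xxi, 1)])
    (g : SF) (hg : Smooth g) :
    Lden ((1 + (k:ℂ))/4) f (Dbar^[k] g)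
      = (-1:ℂ)^pf • Dbar^[k] (Lden ((1 - (k:ℂ))/4) f g) := by
  obtain ⟨m, rfl⟩ := hk
  have h1 : Sm g.1 := hg.1.of_le (by simp)
  have h2 : Sm g.2 := hg.2.of_le (by simp)
  simp only [List.mem_cons, List.mem_singleton, List.not_mem_nil, or_false,
    Prod.mk.injEq] at hf
  rcases hf with ⟨hf, hp⟩|⟨hf, hp⟩|⟨hf, hp⟩|⟨hf, hp⟩|⟨hf, hp⟩ <;> subst hf <;> subst hp
  · -- f = one
    rw [Lden_one, Dbar_odd, Lden_one, Dbar_odd]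
    simp only [pow_zero, one_smul]
    refine Prod.ext ?_ ?_ <;> funext x <;>
      simp only [deriv_const_mul_field, deriv_iter_apply, iter_deriv_comm]
  · -- f = xc
    rw [Lden_xc, Dbar_odd, Lden_xc, Dbar_odd]
    simp only [pow_zero, one_smul]
    refine Prod.ext ?_ ?_ <;> funext x <;>
      simp only [iter_add (h2.deriv.xmul) (h2.cmul _), iter_add (h1.deriv.xmul) (h1.cmul _),
        iter_xmul_deriv h2, iter_xmul_deriv h1, iter_cmul,
        deriv_const_mul_field, deriv_iter_apply, iter_deriv_comm] <;>
      push_cast <;> ring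
  · -- f = xc2
    rw [Lden_xc2, Dbar_odd, Lden_xc2, Dbar_odd]
    simp only [pow_zero, one_smul]
    refine Prod.ext ?_ ?_ <;> funext x <;>
      simp only [iter_add (h2.deriv.x2mul') (h2.xmul.cmul _), iter_add (h1.deriv.x2mul') (h1.xmul.cmul _),
        iter_xmul_deriv h2, iter_xmul_deriv h1,
        iter_x2_deriv h2, iter_x2_deriv h1, iter_xmul h2, iter_xmul h1, iter_cmul,
        deriv_const_mul_field, deriv_iter_apply, iter_deriv_comm] <;>
      push_cast <;> ring
  · -- f = xi
    rw [Lden_xi, Dbar_odd, Lden_xi, Dbar_odd]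
    refine Prod.ext ?_ ?_ <;> funext x <;>
      simp only [pow_one, Prod.smul_fst, Prod.smul_snd, Pi.smul_apply, smul_eq_mul,
        iter_cmul, deriv_const_mul_field, deriv_iter_apply, iter_deriv_comm] <;>
      push_cast <;> ring
  · -- f = xxi
    rw [Lden_xxi, Dbar_odd, Lden_xxi, Dbar_odd]
    refine Prod.ext ?_ ?_ <;> funext x <;>
      simp only [pow_one, Prod.smul_fst, Prod.smul_snd, Pi.smul_apply, smul_eq_mul,
        iter_add ((h1.deriv.xmul).cmul _) (h1.cmul _),
        iter_xmul_deriv h1, iter_xmul h2, iter_cmul,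
        deriv_const_mul_field, deriv_iter_apply, iter_deriv_comm] <;>
      push_cast <;> ring
end
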